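/- Suppose for k = 0,…,t the inequality ρ·[f(x) − f(x̄^k)] + ⟨w − w̄^k, (1/η_k)·Γ(w)⟩ + (1/2)‖w − w^k‖²_{H_k} ≥ (1/2)‖w − w^{k+1}‖²_{H_k} holds for all w ∈ Ω, where f is convex, H_k are symmetric positive semidefinite with H_{k+1} ⪯ H_k, and η_k > 0. Define x̄_t = (1/(t+1))∑_{k=0}^t x̄^k, 1/η_t = (1/(t+1))∑_{k=0}^t 1/η_k, and w̄_t = (∑_k w̄^k/η_k)/(∑_k 1/η_k). Then for any w ∈ Ω: ρ·[f(x̄_t) − f(x)] + ⟨w̄_t − w, (1/η_t)Γ(w)⟩ ≤ (1/(2(t+1)))·‖w − w^0‖²_{H_0}. -/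

import Mathlib

/-!
Since `H (k+1) ⪯ H k`, each step inequality at a fixed `w` says that the `k`-th gap
`ρ (f x̄ᵏ - f x) + η_k⁻¹ ⟨w̄ᵏ - w, Γ w⟩` is at most `Sₖ - Sₖ₊₁`, where
`Sₖ = ½ ‖w - wᵏ‖²_{Hₖ} ≥ 0`. Summing telescopes to `S₀`; dividing by `t + 1`, Jensen bounds
`f` at the average by the average of `f`, and the weighted average `w̄_t` turns the averaged
`Γ`-terms into exactly the pairing in the conclusion.
-/

open Matrix Finset

theorem ConvexOn.map_finset_average_le {E : Type*} [AddCommGroup E] [Module ℝ E] {D : Set E}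
    {f : E → ℝ} (hf : ConvexOn ℝ D f) {ι : Type*} {s : Finset ι} (hs : s.Nonempty)
    {p : ι → E} (hp : ∀ i ∈ s, p i ∈ D) :
    f ((#s : ℝ)⁻¹ • ∑ i ∈ s, p i) ≤ (#s : ℝ)⁻¹ * ∑ i ∈ s, f (p i) := by
  have h := hf.map_centerMass_le (w := fun _ => (1 : ℝ)) (fun _ _ => zero_le_one)
    (by simpa using hs) hp
  simpa [centerMass, smul_eq_mul] using h

theorem dotProduct_mulVec_le_of_posSemidef_sub {ι : Type*} [Fintype ι]
    {A B : Matrix ι ι ℝ} (h : (A - B).PosSemidef) (x : ι → ℝ) :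
    x ⬝ᵥ B *ᵥ x ≤ x ⬝ᵥ A *ᵥ x := by
  have := h.dotProduct_mulVec_nonneg x
  rw [star_trivial, sub_mulVec, dotProduct_sub] at this
  linarith

theorem sum_range_le_of_le_sub_succ {a S : ℕ → ℝ} {n : ℕ}
    (h : ∀ k < n, a k ≤ S k - S (k + 1)) (hS : 0 ≤ S n) :
    ∑ k ∈ range n, a k ≤ S 0 :=
  calc ∑ k ∈ range n, a k ≤ ∑ k ∈ range n, (S k - S (k + 1)) :=
        sum_le_sum fun k hk => h k (mem_range.mp hk)
    _ = S 0 - S n := sum_range_sub' S n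
    _ ≤ S 0 := sub_le_self _ hS

theorem sub_dotProduct_smul_weighted_average {ι α : Type*} [Fintype α] {s : Finset ι}
    {c : ι → ℝ} (hc : ∑ k ∈ s, c k ≠ 0) (v : ι → α → ℝ) (w g : α → ℝ) (N : ℝ) :
    ((∑ k ∈ s, c k)⁻¹ • ∑ k ∈ s, c k • v k - w) ⬝ᵥ (((∑ k ∈ s, c k) / N) • g) =
      N⁻¹ * ∑ k ∈ s, c k * ((v k - w) ⬝ᵥ g) := by
  simp only [dotProduct_smul, sub_dotProduct, smul_dotProduct, sum_dotProduct, smul_eq_mul,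
    mul_sub, sum_sub_distrib, ← sum_mul]
  field_simp

theorem stmt14_general (n m t : ℕ) (Ω : Set (Fin n ⊕ Fin m → ℝ))
    (f : (Fin n → ℝ) → ℝ) (hf : ConvexOn ℝ Set.univ f)
    (Γ : (Fin n ⊕ Fin m → ℝ) → (Fin n ⊕ Fin m → ℝ))
    (H : ℕ → Matrix (Fin n ⊕ Fin m) (Fin n ⊕ Fin m) ℝ)
    (hHpsd : ∀ k, (H k).PosSemidef)
    (hHmono : ∀ k, (H k - H (k+1)).PosSemidef)
    (ρ : ℝ) (hρ : 0 < ρ) (η : ℕ → ℝ) (hη : ∀ k, 0 < η k)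
    (w wb : ℕ → Fin n ⊕ Fin m → ℝ)
    (hstep : ∀ k ≤ t, ∀ w' ∈ Ω,
      (1/2) * ((w' - w (k+1)) ⬝ᵥ (H k) *ᵥ (w' - w (k+1))) ≤
        ρ * (f (fun i => w' (Sum.inl i)) - f (fun i => wb k (Sum.inl i)))
          + (w' - wb k) ⬝ᵥ ((η k)⁻¹ • Γ w')
          + (1/2) * ((w' - w k) ⬝ᵥ (H k) *ᵥ (w' - w k))) :
    ∀ w' ∈ Ω,
      ρ * (f (((t : ℝ) + 1)⁻¹ • ∑ k ∈ Finset.range (t+1), fun i => wb k (Sum.inl i))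
            - f (fun i => w' (Sum.inl i)))
        + (((∑ k ∈ Finset.range (t+1), (η k)⁻¹)⁻¹ •
              ∑ k ∈ Finset.range (t+1), (η k)⁻¹ • wb k) - w') ⬝ᵥ
            (((∑ k ∈ Finset.range (t+1), (η k)⁻¹) / ((t : ℝ) + 1)) • Γ w')
      ≤ (1 / (2 * ((t : ℝ) + 1))) * ((w' - w 0) ⬝ᵥ (H 0) *ᵥ (w' - w 0)) := by
  intro w' hw'
  set x : ℕ → Fin n → ℝ := fun k i => wb k (Sum.inl i)
  set S : ℕ → ℝ := fun k => (1/2) * ((w' - w k) ⬝ᵥ H k *ᵥ (w' - w k))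
  set a : ℕ → ℝ := fun k =>
    ρ * (f (x k) - f (fun i => w' (Sum.inl i))) + (η k)⁻¹ * ((wb k - w') ⬝ᵥ Γ w')
  have hdescent : ∀ k < t + 1, a k ≤ S k - S (k + 1) := by
    intro k hk
    have hH := dotProduct_mulVec_le_of_posSemidef_sub (hHmono k) (w' - w (k + 1))
    have h := hstep k (Nat.lt_succ_iff.mp hk) w' hw'
    rw [dotProduct_smul, smul_eq_mul, ← neg_sub (wb k), neg_dotProduct] at h
    simp only [a, S]
    linarith
  have hS_nonneg : 0 ≤ S (t + 1) := mul_nonneg one_half_pos.le <| by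
    simpa only [star_trivial] using (hHpsd (t + 1)).dotProduct_mulVec_nonneg (w' - w (t + 1))
  have hsum : ∑ k ∈ range (t + 1), a k ≤ S 0 := sum_range_le_of_le_sub_succ hdescent hS_nonneg
  have hjensen := hf.map_finset_average_le (nonempty_range_add_one (n := t))
    (p := x) fun _ _ => Set.mem_univ _
  rw [card_range, Nat.cast_succ] at hjensen
  have hη_sum : ∑ k ∈ range (t + 1), (η k)⁻¹ ≠ 0 :=
    (sum_pos (fun k _ => inv_pos.mpr (hη k)) nonempty_range_add_one).ne'
  rw [sub_dotProduct_smul_weighted_average hη_sum]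
  calc _ ≤ ρ * ((t + 1 : ℝ)⁻¹ * ∑ k ∈ range (t + 1), f (x k) - f (fun i => w' (Sum.inl i)))
          + (t + 1 : ℝ)⁻¹ * ∑ k ∈ range (t + 1), (η k)⁻¹ * ((wb k - w') ⬝ᵥ Γ w') := by
        gcongr
    _ = (t + 1 : ℝ)⁻¹ * ∑ k ∈ range (t + 1), a k := by
        simp only [a, sum_add_distrib, ← mul_sum, sum_sub_distrib, sum_const, card_range,
          nsmul_eq_mul, Nat.cast_succ]
        field_simp
    _ ≤ (t + 1 : ℝ)⁻¹ * S 0 := by gcongr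
    _ = _ := by
        simp only [S]
        field_simp

theorem stmt14 (n m t : ℕ) (Ω : Set (Fin n ⊕ Fin m → ℝ))
    (hΩconv : Convex ℝ Ω) (hΩcl : IsClosed Ω)
    (f : (Fin n → ℝ) → ℝ) (hf : ConvexOn ℝ Set.univ f)
    (Γ : (Fin n ⊕ Fin m → ℝ) → (Fin n ⊕ Fin m → ℝ))
    (H : ℕ → Matrix (Fin n ⊕ Fin m) (Fin n ⊕ Fin m) ℝ)
    (hHpsd : ∀ k, (H k).PosSemidef)
    (hHmono : ∀ k, (H k - H (k+1)).PosSemidef)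
    (ρ : ℝ) (hρ : 0 < ρ) (η : ℕ → ℝ) (hη : ∀ k, 0 < η k)
    (w wb : ℕ → Fin n ⊕ Fin m → ℝ) (hwb : ∀ k, wb k ∈ Ω)
    (hstep : ∀ k ≤ t, ∀ w' ∈ Ω,
      (1/2) * ((w' - w (k+1)) ⬝ᵥ (H k) *ᵥ (w' - w (k+1))) ≤
        ρ * (f (fun i => w' (Sum.inl i)) - f (fun i => wb k (Sum.inl i)))
          + (w' - wb k) ⬝ᵥ ((η k)⁻¹ • Γ w')
          + (1/2) * ((w' - w k) ⬝ᵥ (H k) *ᵥ (w' - w k))) :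
    ∀ w' ∈ Ω,
      ρ * (f (((t : ℝ) + 1)⁻¹ • ∑ k ∈ Finset.range (t+1), fun i => wb k (Sum.inl i))
            - f (fun i => w' (Sum.inl i)))
        + (((∑ k ∈ Finset.range (t+1), (η k)⁻¹)⁻¹ •
              ∑ k ∈ Finset.range (t+1), (η k)⁻¹ • wb k) - w') ⬝ᵥ
            (((∑ k ∈ Finset.range (t+1), (η k)⁻¹) / ((t : ℝ) + 1)) • Γ w')
      ≤ (1 / (2 * ((t : ℝ) + 1))) * ((w' - w 0) ⬝ᵥ (H 0) *ᵥ (w' - w 0)) :=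
  stmt14_general n m t Ω f hf Γ H hHpsd hHmono ρ hρ η hη w wb hstep
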